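/- arXiv:1411.1647 — 2 statements merged into one kernel-verified Lean document; each statement's English description precedes it below -/
import Mathlib

section
/- Let q_{12}, q_{13}, q_{23} be indeterminates. Index the 6 chambers of the braid arrangement A_2 in ℝ³ by the permutations σ of {1,2,3} (the chamber {x_{σ(1)} > x_{σ(2)} > x_{σ(3)}}), and define the 6 × 6 Varchenko matrix M by M(σ, τ) = ∏ q_{ij} over all pairs i < j such that i and j appear in opposite relative orders in σ and τ. Then det M = (1 − q_{12}² q_{13}² q_{23}²) · (1 − q_{12}²)² · (1 − q_{13}²)² · (1 − q_{23}²)². -/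
/-!
Reversing a chamber (`σ ↦ σ * Fin.revPerm`, the antipodal chamber) flips the side of every
hyperplane, so it preserves the Varchenko matrix and swaps "separating" with "not separating".
Listing the chambers as `1, s₁, s₂` followed by their antipodes therefore puts the matrix in the
form `!![A, B; B, A]`, whose determinant is `det (A + B) * det (A - B)`; the two `3 × 3`
determinants factor as `(1 ∓ q₁₂q₁₃q₂₃)(1 - q₁₂²)(1 - q₁₃²)(1 - q₂₃²)`.
-/

open Equiv Matrix

namespace Matrix

variable {ι κ R : Type*} [Fintype ι] [DecidableEq ι] [Fintype κ] [DecidableEq κ] [CommRing R]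

theorem det_fromBlocks_eq_det_add_mul_det_sub (A B : Matrix ι ι R) :
    (fromBlocks A B B A).det = (A + B).det * (A - B).det := by
  have htriang : fromBlocks 1 1 0 1 * fromBlocks A B B A * fromBlocks (1 : Matrix ι ι R) (-1) 0 1 =
      fromBlocks (A + B) 0 B (A - B) := by
    simp only [fromBlocks_multiply, Matrix.one_mul, Matrix.mul_one, Matrix.zero_mul,
      Matrix.mul_zero, Matrix.mul_neg, zero_add, add_zero]
    congr 1 <;> abel
  have h := congrArg det htriang
  rwa [det_mul, det_mul, det_fromBlocks_zero₂₁, det_fromBlocks_zero₂₁, det_fromBlocks_zero₁₂,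
    det_one, one_mul, one_mul, mul_one] at h

theorem det_eq_det_add_mul_det_sub_of_involutive (M : Matrix κ κ R) (f : ι → κ) {g : κ → κ}
    (hg : Function.Involutive g) (hM : ∀ a b, M (g a) b = M a (g b))
    (hfg : Function.Bijective (Sum.elim f (g ∘ f))) :
    M.det = (M.submatrix f f + M.submatrix f (g ∘ f)).det *
      (M.submatrix f f - M.submatrix f (g ∘ f)).det := by
  let e := Equiv.ofBijective _ hfg
  have hblocks : M.submatrix e e =
      fromBlocks (M.submatrix f f) (M.submatrix f (g ∘ f))
        (M.submatrix f (g ∘ f)) (M.submatrix f f) := by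
    ext (i | i) (j | j)
    · rfl
    · rfl
    · exact hM (f i) (f j)
    · simp only [submatrix_apply, fromBlocks_apply₂₂, e, ofBijective_apply, Sum.elim_inr,
        Function.comp_apply, hM, hg (f j)]
  rw [← det_submatrix_equiv_self e, hblocks, det_fromBlocks_eq_det_add_mul_det_sub]

end Matrix

theorem Fin.inv_mul_revPerm_apply {n : ℕ} (σ : Perm (Fin n)) (i : Fin n) :
    (σ * (Fin.revPerm : Perm (Fin n)))⁻¹ i = (σ⁻¹ i).rev := by
  rw [_root_.mul_inv_rev, Perm.mul_apply]
  rfl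

theorem Fin.mul_revPerm_involutive (n : ℕ) :
    Function.Involutive fun σ : Perm (Fin n) => σ * Fin.revPerm := fun σ => by
  ext i
  simp

/-- The hyperplane `x_i = x_j` does not separate the chambers of `σ` and `τ`. -/
abbrev SameSide {n : ℕ} (i j : Fin n) (σ τ : Perm (Fin n)) : Prop :=
  σ⁻¹ i < σ⁻¹ j ↔ τ⁻¹ i < τ⁻¹ j

theorem sameSide_mul_revPerm_left_iff {n : ℕ} {i j : Fin n} (hij : i ≠ j) (σ τ : Perm (Fin n)) :
    SameSide i j (σ * Fin.revPerm) τ ↔ SameSide i j σ (τ * Fin.revPerm) := by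
  have hσ : σ⁻¹ i ≠ σ⁻¹ j := σ⁻¹.injective.ne hij
  have hτ : τ⁻¹ i ≠ τ⁻¹ j := τ⁻¹.injective.ne hij
  simp only [SameSide, Fin.inv_mul_revPerm_apply, Fin.rev_lt_rev]
  omega

def idAndSimpleSwaps : Fin 3 → Perm (Fin 3) := ![1, swap 0 1, swap 1 2]

theorem bijective_sumElim_idAndSimpleSwaps_mul_revPerm :
    Function.Bijective
      (Sum.elim idAndSimpleSwaps ((fun σ => σ * Fin.revPerm) ∘ idAndSimpleSwaps)) := by
  decide

def varchenkoA2 {R : Type*} [CommRing R] (q12 q13 q23 : R) :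
    Matrix (Perm (Fin 3)) (Perm (Fin 3)) R :=
  of fun σ τ => (if SameSide 0 1 σ τ then 1 else q12) * (if SameSide 0 2 σ τ then 1 else q13) *
    (if SameSide 1 2 σ τ then 1 else q23)

namespace varchenkoA2

variable {R : Type*} [CommRing R] (q12 q13 q23 : R)

theorem apply_mul_revPerm_left (σ τ : Perm (Fin 3)) :
    varchenkoA2 q12 q13 q23 (σ * Fin.revPerm) τ = varchenkoA2 q12 q13 q23 σ (τ * Fin.revPerm) := by
  simp only [varchenkoA2, of_apply,
    sameSide_mul_revPerm_left_iff (show (0 : Fin 3) ≠ 1 by decide),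
    sameSide_mul_revPerm_left_iff (show (0 : Fin 3) ≠ 2 by decide),
    sameSide_mul_revPerm_left_iff (show (1 : Fin 3) ≠ 2 by decide)]

theorem submatrix_idAndSimpleSwaps :
    (varchenkoA2 q12 q13 q23).submatrix idAndSimpleSwaps idAndSimpleSwaps =
      !![1, q12, q23; q12, 1, q12 * q23; q23, q12 * q23, 1] := by
  ext i j
  fin_cases i <;> fin_cases j <;> simp +decide [varchenkoA2, idAndSimpleSwaps]

theorem submatrix_idAndSimpleSwaps_antipodes :
    (varchenkoA2 q12 q13 q23).submatrix idAndSimpleSwaps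
        ((fun σ => σ * Fin.revPerm) ∘ idAndSimpleSwaps) =
      !![q12 * q13 * q23, q13 * q23, q12 * q13;
        q13 * q23, q12 * q13 * q23, q13;
        q12 * q13, q13, q12 * q13 * q23] := by
  ext i j
  fin_cases i <;> fin_cases j <;> simp +decide [varchenkoA2, idAndSimpleSwaps]

end varchenkoA2

theorem det_varchenkoA2 {R : Type*} [CommRing R] (q12 q13 q23 : R) :
    (varchenkoA2 q12 q13 q23).det =
    ((1 - q12 * q13 * q23) * (1 - q12 ^ 2) * (1 - q13 ^ 2) * (1 - q23 ^ 2)) *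
      ((1 + q12 * q13 * q23) * (1 - q12 ^ 2) * (1 - q13 ^ 2) * (1 - q23 ^ 2)) := by
  rw [det_eq_det_add_mul_det_sub_of_involutive _ idAndSimpleSwaps (Fin.mul_revPerm_involutive 3)
    (varchenkoA2.apply_mul_revPerm_left q12 q13 q23)
    bijective_sumElim_idAndSimpleSwaps_mul_revPerm,
    varchenkoA2.submatrix_idAndSimpleSwaps, varchenkoA2.submatrix_idAndSimpleSwaps_antipodes]
  congr 1 <;>
  · simp [det_fin_three]
    ring

/-- Varchenko determinant of the braid arrangement `A_2`: with chambers indexed by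
permutations of `{1,2,3}` and entry the product of the weights of the separating
hyperplanes, `det M = (1 − q₁₂²q₁₃²q₂₃²)(1 − q₁₂²)²(1 − q₁₃²)²(1 − q₂₃²)²`. -/
theorem A2_varchenko (R : Type*) [CommRing R] (q12 q13 q23 : R)
    (M : Matrix (Equiv.Perm (Fin 3)) (Equiv.Perm (Fin 3)) R)
    (hM : ∀ σ τ : Equiv.Perm (Fin 3), M σ τ =
      (if (σ⁻¹ 0 < σ⁻¹ 1 ↔ τ⁻¹ 0 < τ⁻¹ 1) then 1 else q12) *
      (if (σ⁻¹ 0 < σ⁻¹ 2 ↔ τ⁻¹ 0 < τ⁻¹ 2) then 1 else q13) *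
      (if (σ⁻¹ 1 < σ⁻¹ 2 ↔ τ⁻¹ 1 < τ⁻¹ 2) then 1 else q23)) :
    M.det = (1 - q12 ^ 2 * q13 ^ 2 * q23 ^ 2) *
      (1 - q12 ^ 2) ^ 2 * (1 - q13 ^ 2) ^ 2 * (1 - q23 ^ 2) ^ 2 := by
  have hMV : M = varchenkoA2 q12 q13 q23 := ext hM
  rw [hMV, det_varchenkoA2]
  ring
end

section
/- Let q_1, q_2, q_{12}, q_{-12} be indeterminates. Index the 8 chambers of the B_2 arrangement in ℝ² by pairs (ε, σ) with ε ∈ {±1}² and σ ∈ S_2 (the chamber {ε_1 x_{σ(1)} > ε_2 x_{σ(2)} > 0}), and let M be the 8 × 8 matrix whose (C, C') entry is the product, over the four lines {x_1 = x_2}, {x_1 = −x_2}, {x_1 = 0}, {x_2 = 0} (with respective weights q_{12}, q_{−12}, q_1, q_2), of the weights of the lines separating C from C'. Then det M = (1 − q_{12}²)² · (1 − q_{−12}²)² · (1 − q_1²)² · (1 − q_2²)² · (1 − q_1² q_2² q_{12}² q_{−12}²)². -/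
/-!
Order the chambers as the four lying in the half-plane `x₁ + x₂ < 0`, followed by their
antipodes. The antipodal map preserves separation, so in this order `M = [[A, B], [B, A]]` and
`det M = det (A + B) * det (A - B)`. The line `x₁ = -x₂` separates each chamber of the first half
from each chamber of the second and no two chambers within a half, so `A` is free of `q₋₁₂` and
`B = q₋₁₂ • B₀` with `B₀` free of it. A direct `4 × 4` expansion gives
`det (A + t • B₀) = (1 - q₁₂²) (1 - t²) (1 - q₁²) (1 - q₂²) (1 - t q₁₂ q₁ q₂)²`,
and `t = ± q₋₁₂` yields the two halves of the product.
-/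

open Matrix

theorem Matrix.det_fromBlocks_eq_det_add_mul_det_sub_s18 {n R : Type*} [DecidableEq n] [Fintype n]
    [CommRing R] (A B : Matrix n n R) :
    (fromBlocks A B B A).det = (A + B).det * (A - B).det := by
  have h : fromBlocks 1 1 0 1 * fromBlocks A B B A * fromBlocks 1 (-1) 0 1 =
      fromBlocks (A + B) 0 B (A - B) := by
    simp only [fromBlocks_multiply, Matrix.mul_one, Matrix.one_mul, Matrix.mul_neg,
      Matrix.zero_mul, Matrix.mul_zero, add_zero, zero_add]
    congr 1 <;> abel
  simpa [det_fromBlocks_zero₁₂, det_fromBlocks_zero₂₁] using congrArg det h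

abbrev B2Chamber := (Fin 2 → Bool) × Equiv.Perm (Fin 2)

noncomputable def b2ChamberEquiv : Fin 4 ⊕ Fin 4 ≃ B2Chamber :=
  Equiv.ofBijective
    (Sum.elim
      ![(![false, false], 1), (![false, false], Equiv.swap 0 1),
        (![false, true], 1), (![false, true], Equiv.swap 0 1)]
      ![(![true, true], 1), (![true, true], Equiv.swap 0 1),
        (![true, false], 1), (![true, false], Equiv.swap 0 1)])
    (by decide)

section Blocks

variable {R : Type*} [CommRing R]

def b2NearBlock (a c d : R) : Matrix (Fin 4) (Fin 4) R :=
  !![1, a, d, a*c; a, 1, a*d, c; d, a*d, 1, a*c*d; a*c, c, a*c*d, 1]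

def b2FarBlock (a c d : R) : Matrix (Fin 4) (Fin 4) R :=
  !![a*c*d, c*d, a*c, d; c*d, a*c*d, c, a*d; a*c, c, a*c*d, 1; d, a*d, 1, a*c*d]

theorem det_b2NearBlock_add_smul_b2FarBlock (a b c d : R) :
    (b2NearBlock a c d + b • b2FarBlock a c d).det =
      (1 - a ^ 2) * (1 - b ^ 2) * (1 - c ^ 2) * (1 - d ^ 2) * (1 - a * b * c * d) ^ 2 := by
  rw [det_succ_row_zero]
  simp [b2NearBlock, b2FarBlock, Fin.sum_univ_succ, det_fin_three, Fin.succAbove]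
  ring

theorem submatrix_b2ChamberEquiv {q1 q2 q12 qm12 : R} {pt : B2Chamber → Fin 2 → ℤ}
    (hpt : ∀ C i, pt C i = (if C.1 (C.2⁻¹ i) then 1 else -1) * ((2 : ℤ) - (C.2⁻¹ i : ℕ)))
    {M : Matrix B2Chamber B2Chamber R}
    (hM : ∀ C C', M C C' =
      (if (0 < pt C 0 - pt C 1 ↔ 0 < pt C' 0 - pt C' 1) then 1 else q12) *
      (if (0 < pt C 0 + pt C 1 ↔ 0 < pt C' 0 + pt C' 1) then 1 else qm12) *
      (if (0 < pt C 0 ↔ 0 < pt C' 0) then 1 else q1) *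
      (if (0 < pt C 1 ↔ 0 < pt C' 1) then 1 else q2)) :
    M.submatrix b2ChamberEquiv b2ChamberEquiv =
      fromBlocks (b2NearBlock q12 q1 q2) (qm12 • b2FarBlock q12 q1 q2)
        (qm12 • b2FarBlock q12 q1 q2) (b2NearBlock q12 q1 q2) := by
  ext (i | i) (j | j) <;> fin_cases i <;> fin_cases j <;>
    simp [b2ChamberEquiv, b2NearBlock, b2FarBlock, hM, hpt, Equiv.swap_apply_left,
      Equiv.swap_apply_right] <;> ring

end Blocks

/-- The chamber `(ε, σ)` is represented by its point `x_{σ(k)} = ±(2 - k)`; a line separates two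
chambers iff its linear form has opposite signs at their points. -/
theorem B2_varchenko (R : Type*) [CommRing R] (q1 q2 q12 qm12 : R)
    (pt : (Fin 2 → Bool) × Equiv.Perm (Fin 2) → Fin 2 → ℤ)
    (hpt : ∀ C i, pt C i = (if C.1 (C.2⁻¹ i) then 1 else -1) * ((2 : ℤ) - (C.2⁻¹ i : ℕ)))
    (M : Matrix ((Fin 2 → Bool) × Equiv.Perm (Fin 2))
      ((Fin 2 → Bool) × Equiv.Perm (Fin 2)) R)
    (hM : ∀ C C', M C C' =
      (if (0 < pt C 0 - pt C 1 ↔ 0 < pt C' 0 - pt C' 1) then 1 else q12) *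
      (if (0 < pt C 0 + pt C 1 ↔ 0 < pt C' 0 + pt C' 1) then 1 else qm12) *
      (if (0 < pt C 0 ↔ 0 < pt C' 0) then 1 else q1) *
      (if (0 < pt C 1 ↔ 0 < pt C' 1) then 1 else q2)) :
    M.det = (1 - q12 ^ 2) ^ 2 * (1 - qm12 ^ 2) ^ 2 * (1 - q1 ^ 2) ^ 2 * (1 - q2 ^ 2) ^ 2 *
      (1 - q1 ^ 2 * q2 ^ 2 * q12 ^ 2 * qm12 ^ 2) ^ 2 := by
  rw [← det_submatrix_equiv_self b2ChamberEquiv M, submatrix_b2ChamberEquiv hpt hM,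
    det_fromBlocks_eq_det_add_mul_det_sub_s18, sub_eq_add_neg, ← neg_smul,
    det_b2NearBlock_add_smul_b2FarBlock, det_b2NearBlock_add_smul_b2FarBlock]
  ring
end
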